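/- arXiv:2203.06959 — 2 statements merged into one kernel-verified Lean document; each statement's English description precedes it below -/
import Mathlib

section
/- Let A, M, N, V, T ∈ ℝ^{n×n}, B ∈ ℝ^{n×m}, B_w ∈ ℝ^{n×q}, W ∈ ℝ^{q×n}, W_0 ∈ ℝ^{q×m}, R_0, R_1 ∈ ℝ^{n×m} and s_0 ∈ ℝ. Assume that s_0 I − A, N and T are invertible, and that N = (s_0 I − A) M − B_w W, (s_0 I − A) V = A T + s_0 B_w W, and R_1 = A R_0 + B + B_w W_0. Then (s_0 I − A)^{−1} B = M N^{−1} R_1 − V T^{−1} R_0 − (s_0 I − A)^{−1} B_w ( W ( N^{−1} R_1 − s_0 T^{−1} R_0 ) + W_0 ). -/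
/-- Combining the three data equations gives the representation of
`(s₀ I - A)⁻¹ B`:
`(s₀ I - A)⁻¹ B = M N⁻¹ R₁ - V T⁻¹ R₀ - (s₀ I - A)⁻¹ B_w (W (N⁻¹ R₁ - s₀ T⁻¹ R₀) + W₀)`. -/
theorem inv_shift_mul_B_data_representation
    {n m q : ℕ} (A M N V T : Matrix (Fin n) (Fin n) ℝ)
    (B : Matrix (Fin n) (Fin m) ℝ) (Bw : Matrix (Fin n) (Fin q) ℝ)
    (W : Matrix (Fin q) (Fin n) ℝ) (W0 : Matrix (Fin q) (Fin m) ℝ)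
    (R0 R1 : Matrix (Fin n) (Fin m) ℝ) (s₀ : ℝ)
    (hA : IsUnit (s₀ • (1 : Matrix (Fin n) (Fin n) ℝ) - A).det)
    (hN : IsUnit N.det) (hT : IsUnit T.det)
    (h1 : N = (s₀ • (1 : Matrix (Fin n) (Fin n) ℝ) - A) * M - Bw * W)
    (h2 : (s₀ • (1 : Matrix (Fin n) (Fin n) ℝ) - A) * V = A * T + s₀ • (Bw * W))
    (h3 : R1 = A * R0 + B + Bw * W0) :
    (s₀ • (1 : Matrix (Fin n) (Fin n) ℝ) - A)⁻¹ * B =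
      M * N⁻¹ * R1 - V * T⁻¹ * R0 -
        (s₀ • (1 : Matrix (Fin n) (Fin n) ℝ) - A)⁻¹ * Bw *
          (W * (N⁻¹ * R1 - s₀ • (T⁻¹ * R0)) + W0) := by
  set S := s₀ • (1 : Matrix (Fin n) (Fin n) ℝ) - A with hS
  have hSS : S * S⁻¹ = 1 := Matrix.mul_nonsing_inv _ hA
  have hNN : N * N⁻¹ = 1 := Matrix.mul_nonsing_inv _ hN
  have hTT : T * T⁻¹ = 1 := Matrix.mul_nonsing_inv _ hT
  have hSM : S * M = N + Bw * W := by rw [h1]; abel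
  have hATT : A * T * T⁻¹ = A := by rw [Matrix.mul_assoc, hTT, Matrix.mul_one]
  have key : S * (M * N⁻¹ * R1 - V * T⁻¹ * R0 -
      S⁻¹ * Bw * (W * (N⁻¹ * R1 - s₀ • (T⁻¹ * R0)) + W0)) = B := by
    simp only [Matrix.mul_sub, ← Matrix.mul_assoc]
    rw [hSM, h2, hSS, Matrix.one_mul]
    simp only [Matrix.add_mul, Matrix.sub_mul, Matrix.smul_mul, Matrix.mul_add,
      Matrix.mul_sub, Matrix.mul_smul, ← Matrix.mul_assoc]
    rw [hNN, hATT, Matrix.one_mul, h3]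
    abel
  calc S⁻¹ * B = S⁻¹ * (S * (M * N⁻¹ * R1 - V * T⁻¹ * R0 -
      S⁻¹ * Bw * (W * (N⁻¹ * R1 - s₀ • (T⁻¹ * R0)) + W0))) := by rw [key]
    _ = _ := by rw [← Matrix.mul_assoc, Matrix.nonsing_inv_mul _ hA, Matrix.one_mul]
end

section
/- (Petersen's Lemma.) Let Z ∈ ℝ^{n×n} be a symmetric matrix, and let X ∈ ℝ^{n×p} and Y ∈ ℝ^{q×n}. Then Z + X Δ Y + Yᵀ Δᵀ Xᵀ is negative definite for every matrix Δ ∈ ℝ^{p×q} satisfying Δᵀ Δ ⪯ I_q, if and only if there exists a real scalar ε > 0 such that Z + ε X Xᵀ + (1/ε) Yᵀ Y is negative definite. -/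
/-!
The easy direction is the pointwise inequality `2 xᵀ Δ y ≤ ε |x|² + ε⁻¹ |Δ y|²`. For the
converse, testing against rank-one contractions `Δ` shows that every unit vector `v` satisfies
`vᵀZv + 2 |Xᵀv| |Yv| < 0`, i.e. `inf_{ε>0} vᵀ M(ε) v < 0` for `M(ε) = Z + ε XXᵀ + ε⁻¹ YᵀY`, and
one has to swap `inf_ε` and `max_v`. After perturbing `XXᵀ` and `YᵀY` to be positive definite,
the parameters `s` such that, for `ε = exp s`, some top unit eigenvector `v` of `M(ε)` has
`ε |Xᵀv|² ≥ ε⁻¹ |Yv|²`, resp. `≤`, form two closed sets covering `ℝ`, both nonempty; by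
connectedness they meet. The top eigenspace at a common point contains a unit vector with
`ε |Xᵀv|² = ε⁻¹ |Yv|²` (intermediate value theorem on a segment), at which the top eigenvalue
equals `vᵀZv + 2 |Xᵀv| |Yv| < 0`.
-/

open Matrix Filter Topology Real

section Compact

variable {X E : Type*} [TopologicalSpace X] [TopologicalSpace E] {S : Set E}

theorem IsCompact.exists_pos_forall_pos (hS : IsCompact S) {F : ℝ → E → ℝ}
    (hF : Continuous ↿F) (h : ∀ v ∈ S, 0 < F 0 v) : ∃ δ > 0, ∀ v ∈ S, 0 < F δ v := by
  have : ∀ᶠ δ in 𝓝 0, ∀ v ∈ S, 0 < F δ v :=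
    hS.eventually_forall_of_forall_eventually fun v hv =>
      (hF.tendsto (0, v)).eventually (lt_mem_nhds (h v hv))
  obtain ⟨δ, hδ, hδpos⟩ := ((this.filter_mono nhdsWithin_le_nhds).and
    (self_mem_nhdsWithin (s := Set.Ioi (0 : ℝ)))).exists
  exact ⟨δ, hδpos, hδ⟩

theorem IsCompact.isClosed_setOf_exists_isMaxOn_nonneg [T2Space E] (hS : IsCompact S)
    {f g : X → E → ℝ} (hf : Continuous ↿f) (hg : Continuous ↿g) :
    IsClosed {x | ∃ v ∈ S, IsMaxOn (f x) S v ∧ 0 ≤ g x v} := by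
  set C : Set (X × E) := {p | p.2 ∈ S ∧ (∀ u ∈ S, f p.1 u ≤ f p.1 p.2) ∧ 0 ≤ g p.1 p.2}
  have hmax : IsClosed {p : X × E | ∀ u ∈ S, f p.1 u ≤ f p.1 p.2} := by
    simp only [Set.ofPred_forall]
    exact isClosed_biInter fun u _ =>
      isClosed_le (hf.comp (continuous_fst.prodMk continuous_const)) hf
  have hC : IsClosed C :=
    (hS.isClosed.preimage continuous_snd).inter (hmax.inter (isClosed_le continuous_const hg))
  refine isOpen_compl_iff.1 (isOpen_iff_eventually.2 fun x hx => ?_)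
  have : ∀ v ∈ S, ∀ᶠ p in 𝓝 (x, v), p ∉ C := fun v hv =>
    hC.isOpen_compl.mem_nhds fun hxv => hx ⟨v, hv, hxv.2⟩
  exact (hS.eventually_forall_of_forall_eventually (P := fun x' v => (x', v) ∉ C) this).mono
    fun x' hx' ⟨v, hv, hmax, hg⟩ => hx' v hv ⟨hv, hmax, hg⟩

theorem exists_isMaxOn_nonneg_and_isMaxOn_nonpos [PreconnectedSpace X] [T2Space E]
    (hS : IsCompact S) (hne : S.Nonempty) {f g : X → E → ℝ} (hf : Continuous ↿f)
    (hg : Continuous ↿g) (hpos : ∃ x, ∀ v ∈ S, 0 ≤ g x v) (hneg : ∃ x, ∀ v ∈ S, g x v ≤ 0) :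
    ∃ x, (∃ v ∈ S, IsMaxOn (f x) S v ∧ 0 ≤ g x v) ∧
      ∃ v ∈ S, IsMaxOn (f x) S v ∧ g x v ≤ 0 := by
  have hmax (x : X) : ∃ v ∈ S, IsMaxOn (f x) S v :=
    hS.exists_isMaxOn hne (hf.comp (Continuous.prodMk_right x)).continuousOn
  have hcover (x : X) : x ∈ {x | ∃ v ∈ S, IsMaxOn (f x) S v ∧ 0 ≤ g x v} ∪
      {x | ∃ v ∈ S, IsMaxOn (f x) S v ∧ 0 ≤ -g x v} := by
    obtain ⟨v, hv, hmaxv⟩ := hmax x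
    rcases le_total 0 (g x v) with h | h
    · exact Or.inl ⟨v, hv, hmaxv, h⟩
    · exact Or.inr ⟨v, hv, hmaxv, neg_nonneg.2 h⟩
  obtain ⟨x₁, h₁⟩ := hpos
  obtain ⟨x₂, h₂⟩ := hneg
  obtain ⟨v₁, hv₁, hmax₁⟩ := hmax x₁
  obtain ⟨v₂, hv₂, hmax₂⟩ := hmax x₂
  obtain ⟨x, -, hxP, v, hv, hmaxv, hgv⟩ := isPreconnected_closed_iff.1 isPreconnected_univ _ _
    (hS.isClosed_setOf_exists_isMaxOn_nonneg hf hg)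
    (hS.isClosed_setOf_exists_isMaxOn_nonneg (g := fun x v => -g x v) hf hg.neg)
    (fun x _ => hcover x) ⟨x₁, trivial, v₁, hv₁, hmax₁, h₁ v₁ hv₁⟩
    ⟨x₂, trivial, v₂, hv₂, hmax₂, neg_nonneg.2 (h₂ v₂ hv₂)⟩
  exact ⟨x, hxP, v, hv, hmaxv, neg_nonneg.1 hgv⟩

end Compact

theorem exists_exp_neg_mul_le_exp_mul {α : Type*} {S : Set α} {a b : α → ℝ} {δ C : ℝ}
    (hδ : 0 < δ) (ha : ∀ v ∈ S, δ ≤ a v) (hb : ∀ v ∈ S, 0 ≤ b v ∧ b v ≤ C) :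
    ∃ s, ∀ v ∈ S, exp (-s) * b v ≤ exp s * a v := by
  refine ⟨|C| / δ, fun v hv => ?_⟩
  have hs : 0 ≤ |C| / δ := by positivity
  calc exp (-(|C| / δ)) * b v ≤ 1 * |C| :=
        mul_le_mul (exp_le_one_iff.2 (neg_nonpos.2 hs)) ((hb v hv).2.trans (le_abs_self C))
          (hb v hv).1 zero_le_one
    _ ≤ (|C| / δ + 1) * δ := by rw [add_mul, div_mul_cancel₀ _ hδ.ne']; linarith
    _ ≤ exp (|C| / δ) * a v :=
        mul_le_mul (add_one_le_exp _) (ha v hv) hδ.le (exp_pos _).le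

theorem add_mul_add_mul_neg {z a b p r : ℝ} (hz : z < 0) (h : 4 * a * b < z ^ 2)
    (hpr : p * r = 1) (hab : p * a = r * b) : z + p * a + r * b < 0 := by
  have hsq : (p * a + r * b) ^ 2 = 4 * a * b := by
    linear_combination (p * a - r * b) * hab + 4 * a * b * hpr
  nlinarith

section Quadratic

variable {ι m k : Type*} [Fintype ι] [Fintype m] [Fintype k]

theorem dotProduct_sq_le_dotProduct_self_mul (x y : ι → ℝ) :
    (x ⬝ᵥ y) ^ 2 ≤ (x ⬝ᵥ x) * (y ⬝ᵥ y) := by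
  simpa only [dotProduct, sq] using Finset.sum_mul_sq_le_sq_mul_sq Finset.univ x y

theorem two_mul_dotProduct_le {ε : ℝ} (hε : 0 < ε) (x y : ι → ℝ) :
    2 * (x ⬝ᵥ y) ≤ ε * (x ⬝ᵥ x) + ε⁻¹ * (y ⬝ᵥ y) := by
  have h := mul_nonneg (inv_nonneg.2 hε.le) (dotProduct_self_star_nonneg (ε • x - y))
  simp only [star_trivial, sub_dotProduct, dotProduct_sub, smul_dotProduct, dotProduct_smul,
    smul_eq_mul, dotProduct_comm y x] at h
  linear_combination h + (ε * (x ⬝ᵥ x) - 2 * (x ⬝ᵥ y)) * inv_mul_cancel₀ hε.ne'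

theorem continuous_dotProduct_mulVec (M : Matrix ι ι ℝ) :
    Continuous fun v : ι → ℝ => v ⬝ᵥ M *ᵥ v :=
  continuous_id.dotProduct (continuous_const.matrix_mulVec continuous_id)

theorem dotProduct_smul_mulVec_smul (M : Matrix ι ι ℝ) (c : ℝ) (v : ι → ℝ) :
    (c • v) ⬝ᵥ M *ᵥ (c • v) = c ^ 2 * (v ⬝ᵥ M *ᵥ v) := by
  simp only [mulVec_smul, dotProduct_smul, smul_dotProduct, smul_eq_mul]; ring

theorem dotProduct_mulVec_add_smul_add_smul (Z A B : Matrix ι ι ℝ) (p r : ℝ) (v : ι → ℝ) :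
    v ⬝ᵥ (Z + p • A + r • B) *ᵥ v =
      v ⬝ᵥ Z *ᵥ v + p * (v ⬝ᵥ A *ᵥ v) + r * (v ⬝ᵥ B *ᵥ v) := by
  simp only [add_mulVec, smul_mulVec, dotProduct_add, dotProduct_smul, smul_eq_mul]

theorem dotProduct_mulVec_mul_transpose (X : Matrix ι m ℝ) (v : ι → ℝ) :
    v ⬝ᵥ (X * Xᵀ) *ᵥ v = (v ᵥ* X) ⬝ᵥ (v ᵥ* X) := by
  rw [← mulVec_mulVec, dotProduct_mulVec, mulVec_transpose]

theorem dotProduct_mulVec_transpose_mul (Y : Matrix k ι ℝ) (v : ι → ℝ) :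
    v ⬝ᵥ (Yᵀ * Y) *ᵥ v = (Y *ᵥ v) ⬝ᵥ (Y *ᵥ v) := by
  rw [← mulVec_mulVec, dotProduct_mulVec, vecMul_transpose]

theorem dotProduct_mulVec_add_mul_mul_add_transpose (Z : Matrix ι ι ℝ) (X : Matrix ι m ℝ)
    (Δ : Matrix m k ℝ) (Y : Matrix k ι ℝ) (v : ι → ℝ) :
    v ⬝ᵥ (Z + X * Δ * Y + Yᵀ * Δᵀ * Xᵀ) *ᵥ v =
      v ⬝ᵥ Z *ᵥ v + 2 * ((v ᵥ* X) ⬝ᵥ Δ *ᵥ (Y *ᵥ v)) := by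
  have h : v ⬝ᵥ (Yᵀ * Δᵀ * Xᵀ) *ᵥ v = v ⬝ᵥ (X * Δ * Y) *ᵥ v := by
    rw [← transpose_mul, ← transpose_mul, ← Matrix.mul_assoc, mulVec_transpose,
      dotProduct_comm, ← dotProduct_mulVec]
  rw [add_mulVec, add_mulVec, dotProduct_add, dotProduct_add, h, ← mulVec_mulVec,
    ← mulVec_mulVec, dotProduct_mulVec v X]
  ring

theorem one_sub_transpose_mul_self_posSemidef_iff [DecidableEq k] {Δ : Matrix m k ℝ} :
    (1 - Δᵀ * Δ).PosSemidef ↔ ∀ w, (Δ *ᵥ w) ⬝ᵥ (Δ *ᵥ w) ≤ w ⬝ᵥ w := by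
  have hq (w : k → ℝ) : star w ⬝ᵥ (1 - Δᵀ * Δ) *ᵥ w = w ⬝ᵥ w - (Δ *ᵥ w) ⬝ᵥ (Δ *ᵥ w) := by
    rw [star_trivial, sub_mulVec, one_mulVec, dotProduct_sub, dotProduct_mulVec_transpose_mul]
  have hsymm : (1 - Δᵀ * Δ).IsHermitian := by
    simpa using isHermitian_one.sub (isHermitian_conjTranspose_mul_self Δ)
  simp only [posSemidef_iff_dotProduct_mulVec, hsymm, hq, sub_nonneg, true_and]

theorem Matrix.IsHermitian.posDef_neg_iff {M : Matrix ι ι ℝ} (hM : M.IsHermitian) :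
    (-M).PosDef ↔ ∀ v ≠ 0, v ⬝ᵥ M *ᵥ v < 0 := by
  simp only [posDef_iff_dotProduct_mulVec, hM.neg, true_and, star_trivial, neg_mulVec,
    dotProduct_neg, neg_pos]

theorem dotProduct_mulVec_add_mul_mul_add_transpose_le [DecidableEq k] (Z : Matrix ι ι ℝ)
    (X : Matrix ι m ℝ) {Δ : Matrix m k ℝ} (Y : Matrix k ι ℝ) (hΔ : (1 - Δᵀ * Δ).PosSemidef)
    {ε : ℝ} (hε : 0 < ε) (v : ι → ℝ) :
    v ⬝ᵥ (Z + X * Δ * Y + Yᵀ * Δᵀ * Xᵀ) *ᵥ v ≤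
      v ⬝ᵥ (Z + ε • (X * Xᵀ) + ε⁻¹ • (Yᵀ * Y)) *ᵥ v := by
  rw [dotProduct_mulVec_add_mul_mul_add_transpose, dotProduct_mulVec_add_smul_add_smul,
    dotProduct_mulVec_mul_transpose, dotProduct_mulVec_transpose_mul]
  have hΔY := mul_le_mul_of_nonneg_left (one_sub_transpose_mul_self_posSemidef_iff.1 hΔ (Y *ᵥ v))
    (inv_pos.2 hε).le
  linarith [two_mul_dotProduct_le hε (v ᵥ* X) (Δ *ᵥ (Y *ᵥ v))]

theorem neg_and_four_mul_lt_sq_of_forall_contraction [DecidableEq k] {z : ℝ} {x : m → ℝ}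
    {y : k → ℝ} (h : ∀ Δ : Matrix m k ℝ, (1 - Δᵀ * Δ).PosSemidef → z + 2 * (x ⬝ᵥ Δ *ᵥ y) < 0) :
    z < 0 ∧ 4 * (x ⬝ᵥ x) * (y ⬝ᵥ y) < z ^ 2 := by
  have hz : z < 0 := by simpa using h 0 (by simpa using PosSemidef.one)
  refine ⟨hz, not_le.1 fun hle => ?_⟩
  have hxy : 0 < (x ⬝ᵥ x) * (y ⬝ᵥ y) := by nlinarith
  -- the rank-one contraction `t x yᵀ` with `t |x|² |y|² = -z / 2`
  set t := -z / (2 * ((x ⬝ᵥ x) * (y ⬝ᵥ y)))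
  have htxy : t * ((x ⬝ᵥ x) * (y ⬝ᵥ y)) = -z / 2 := by
    simp only [t]; rw [div_mul_eq_mul_div, mul_div_mul_right _ _ hxy.ne']
  have hΔ (w : k → ℝ) : (t • vecMulVec x y) *ᵥ w = (t * (y ⬝ᵥ w)) • x := by
    rw [smul_mulVec, vecMulVec_mulVec, op_smul_eq_smul, smul_smul]
  have hcontr : (1 - (t • vecMulVec x y)ᵀ * (t • vecMulVec x y)).PosSemidef := by
    refine one_sub_transpose_mul_self_posSemidef_iff.2 fun w => ?_
    rw [hΔ, smul_dotProduct, dotProduct_smul, smul_eq_mul, smul_eq_mul]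
    have ht : t ^ 2 * ((x ⬝ᵥ x) * (y ⬝ᵥ y)) ≤ 1 := by
      have : (t * ((x ⬝ᵥ x) * (y ⬝ᵥ y))) ^ 2 ≤ (x ⬝ᵥ x) * (y ⬝ᵥ y) := by
        rw [htxy]; linarith
      nlinarith
    have hx : 0 ≤ x ⬝ᵥ x := by simpa using dotProduct_self_star_nonneg x
    have hw : 0 ≤ w ⬝ᵥ w := by simpa using dotProduct_self_star_nonneg w
    nlinarith [mul_le_mul_of_nonneg_left (dotProduct_sq_le_dotProduct_self_mul y w)
      (mul_nonneg (sq_nonneg t) hx), mul_le_mul_of_nonneg_right ht hw]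
  have := h _ hcontr
  rw [hΔ, dotProduct_smul, smul_eq_mul] at this
  linarith

end Quadratic

section UnitSphere

variable {ι : Type*} [Fintype ι]

variable (ι) in
def unitSphere : Set (ι → ℝ) := {v | v ⬝ᵥ v = 1}

theorem mem_unitSphere {v : ι → ℝ} : v ∈ unitSphere ι ↔ v ⬝ᵥ v = 1 := Iff.rfl

theorem ne_zero_of_mem_unitSphere {v : ι → ℝ} (hv : v ∈ unitSphere ι) : v ≠ 0 := by
  rintro rfl
  simp [mem_unitSphere] at hv

theorem isCompact_unitSphere : IsCompact (unitSphere ι) := by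
  have h : unitSphere ι = (EuclideanSpace.equiv ι ℝ).symm ⁻¹' Metric.sphere 0 1 := by
    ext v
    simp [mem_unitSphere, EuclideanSpace.norm_eq, dotProduct, Real.sqrt_eq_one, sq]
  rw [h]
  exact (EuclideanSpace.equiv ι ℝ).symm.toHomeomorph.isCompact_preimage.2 (isCompact_sphere 0 1)

theorem exists_pos_smul_mem_unitSphere {v : ι → ℝ} (hv : v ≠ 0) :
    ∃ c > (0 : ℝ), ∃ w ∈ unitSphere ι, v = c • w := by
  have hpos : 0 < v ⬝ᵥ v := by
    simpa using (dotProduct_star_self_nonneg v).lt_of_ne' (by simpa using hv)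
  have hc := Real.sqrt_pos.2 hpos
  refine ⟨√(v ⬝ᵥ v), hc, (√(v ⬝ᵥ v))⁻¹ • v, ?_, (smul_inv_smul₀ hc.ne' v).symm⟩
  rw [mem_unitSphere, smul_dotProduct, dotProduct_smul, smul_eq_mul, smul_eq_mul, ← mul_assoc,
    ← mul_inv, Real.mul_self_sqrt hpos.le, inv_mul_cancel₀ hpos.ne']

theorem dotProduct_mulVec_le_of_forall_unitSphere {M : Matrix ι ι ℝ} {μ : ℝ}
    (h : ∀ w ∈ unitSphere ι, w ⬝ᵥ M *ᵥ w ≤ μ) (v : ι → ℝ) :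
    v ⬝ᵥ M *ᵥ v ≤ μ * (v ⬝ᵥ v) := by
  rcases eq_or_ne v 0 with rfl | hv
  · simp
  obtain ⟨c, -, w, hw, rfl⟩ := exists_pos_smul_mem_unitSphere hv
  rw [dotProduct_smul_mulVec_smul, smul_dotProduct, dotProduct_smul, mem_unitSphere.1 hw,
    smul_eq_mul, smul_eq_mul, mul_one]
  nlinarith [h w hw, sq_nonneg c]

theorem dotProduct_mulVec_neg_of_forall_unitSphere {M : Matrix ι ι ℝ}
    (h : ∀ w ∈ unitSphere ι, w ⬝ᵥ M *ᵥ w < 0) {v : ι → ℝ} (hv : v ≠ 0) :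
    v ⬝ᵥ M *ᵥ v < 0 := by
  obtain ⟨c, hc, w, hw, rfl⟩ := exists_pos_smul_mem_unitSphere hv
  rw [dotProduct_smul_mulVec_smul]
  exact mul_neg_of_pos_of_neg (pow_pos hc 2) (h w hw)

theorem Matrix.IsHermitian.mulVec_eq_smul_of_isMaxOn {M : Matrix ι ι ℝ} (hM : M.IsHermitian)
    {v : ι → ℝ} (hv : v ∈ unitSphere ι)
    (hmax : IsMaxOn (fun w => w ⬝ᵥ M *ᵥ w) (unitSphere ι) v) :
    M *ᵥ v = (v ⬝ᵥ M *ᵥ v) • v := by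
  classical
  set μ := v ⬝ᵥ M *ᵥ v
  have hN (w : ι → ℝ) : star w ⬝ᵥ (μ • 1 - M) *ᵥ w = μ * (w ⬝ᵥ w) - w ⬝ᵥ M *ᵥ w := by
    rw [star_trivial, sub_mulVec, smul_mulVec, one_mulVec, dotProduct_sub, dotProduct_smul,
      smul_eq_mul]
  have hpsd : (μ • 1 - M).PosSemidef := by
    refine .of_dotProduct_mulVec_nonneg ((isHermitian_one.smul (.all μ)).sub hM) fun w => ?_
    rw [hN, sub_nonneg]
    exact dotProduct_mulVec_le_of_forall_unitSphere (fun w hw => hmax hw) w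
  have hker := (hpsd.dotProduct_mulVec_zero_iff v).1 (by
    rw [hN, mem_unitSphere.1 hv, mul_one, sub_self])
  rw [sub_mulVec, smul_mulVec, one_mulVec, sub_eq_zero] at hker
  exact hker.symm

theorem exists_mem_unitSphere_mulVec_eq_smul_and_dotProduct_mulVec_eq_zero
    {M G : Matrix ι ι ℝ} {μ : ℝ} {v₁ v₂ : ι → ℝ}
    (hv₁ : v₁ ∈ unitSphere ι) (hv₂ : v₂ ∈ unitSphere ι)
    (hM₁ : M *ᵥ v₁ = μ • v₁) (hM₂ : M *ᵥ v₂ = μ • v₂)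
    (hG₁ : 0 ≤ v₁ ⬝ᵥ G *ᵥ v₁) (hG₂ : v₂ ⬝ᵥ G *ᵥ v₂ ≤ 0) :
    ∃ w ∈ unitSphere ι, M *ᵥ w = μ • w ∧ w ⬝ᵥ G *ᵥ w = 0 := by
  set u : ℝ → ι → ℝ := fun t => (1 - t) • v₁ + t • v₂
  have hu (t : ℝ) : M *ᵥ u t = μ • u t := by
    simp only [u, mulVec_add, mulVec_smul, hM₁, hM₂, smul_add, smul_comm μ]
  have hcont : Continuous fun t => u t ⬝ᵥ G *ᵥ u t :=
    (continuous_dotProduct_mulVec G).comp (by fun_prop)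
  obtain ⟨t, -, ht⟩ : ∃ t ∈ Set.Icc (0 : ℝ) 1, u t ⬝ᵥ G *ᵥ u t = 0 :=
    intermediate_value_Icc' zero_le_one hcont.continuousOn
      ⟨by simpa [u] using hG₂, by simpa [u] using hG₁⟩
  by_cases h0 : u t = 0
  · -- the segment passes through `0` only when `v₂ = -v₁`, where `G` takes equal values
    have key : t • v₂ = -((1 - t) • v₁) := eq_neg_of_add_eq_zero_right h0
    have hG := congrArg (fun x => x ⬝ᵥ G *ᵥ x) key
    have hn := congrArg (fun x => x ⬝ᵥ x) key
    simp only [dotProduct_smul_mulVec_smul, mulVec_neg, neg_dotProduct, dotProduct_neg,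
      neg_neg] at hG
    simp only [smul_dotProduct, dotProduct_smul, neg_dotProduct, dotProduct_neg, smul_eq_mul,
      mem_unitSphere.1 hv₁, mem_unitSphere.1 hv₂] at hn
    obtain rfl : t = 1 / 2 := by linarith
    exact ⟨v₁, hv₁, hM₁, by linarith⟩
  · obtain ⟨c, hc, w, hw, hcw⟩ := exists_pos_smul_mem_unitSphere h0
    refine ⟨w, hw, ?_, ?_⟩
    · have := hu t
      rw [hcw, mulVec_smul, smul_comm] at this
      exact smul_right_injective _ hc.ne' this
    · rw [hcw, dotProduct_smul_mulVec_smul] at ht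
      exact (mul_eq_zero.1 ht).resolve_left (pow_pos hc 2).ne'

theorem forall_unitSphere_dotProduct_mulVec_neg_of_isMaxOn {Z A B : Matrix ι ι ℝ}
    (hZ : Z.IsHermitian) (hA : A.IsHermitian) (hB : B.IsHermitian) {p r : ℝ} (hpr : p * r = 1)
    (h : ∀ v ∈ unitSphere ι,
      v ⬝ᵥ Z *ᵥ v < 0 ∧ 4 * (v ⬝ᵥ A *ᵥ v) * (v ⬝ᵥ B *ᵥ v) < (v ⬝ᵥ Z *ᵥ v) ^ 2)
    {v₁ v₂ : ι → ℝ} (hv₁ : v₁ ∈ unitSphere ι) (hv₂ : v₂ ∈ unitSphere ι)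
    (hmax₁ : IsMaxOn (fun v => v ⬝ᵥ (Z + p • A + r • B) *ᵥ v) (unitSphere ι) v₁)
    (hmax₂ : IsMaxOn (fun v => v ⬝ᵥ (Z + p • A + r • B) *ᵥ v) (unitSphere ι) v₂)
    (hg₁ : r * (v₁ ⬝ᵥ B *ᵥ v₁) ≤ p * (v₁ ⬝ᵥ A *ᵥ v₁))
    (hg₂ : p * (v₂ ⬝ᵥ A *ᵥ v₂) ≤ r * (v₂ ⬝ᵥ B *ᵥ v₂)) :
    ∀ v ∈ unitSphere ι, v ⬝ᵥ (Z + p • A + r • B) *ᵥ v < 0 := by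
  set M := Z + p • A + r • B
  have hM : M.IsHermitian := (hZ.add (hA.smul (.all p))).add (hB.smul (.all r))
  set μ := v₁ ⬝ᵥ M *ᵥ v₁
  have hμ : v₂ ⬝ᵥ M *ᵥ v₂ = μ := le_antisymm (hmax₁ hv₂) (hmax₂ hv₁)
  have hG (v : ι → ℝ) : v ⬝ᵥ (p • A - r • B) *ᵥ v = p * (v ⬝ᵥ A *ᵥ v) - r * (v ⬝ᵥ B *ᵥ v) := by
    simp only [sub_mulVec, smul_mulVec, dotProduct_sub, dotProduct_smul, smul_eq_mul]
  obtain ⟨w, hw, hMw, hGw⟩ := exists_mem_unitSphere_mulVec_eq_smul_and_dotProduct_mulVec_eq_zero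
    hv₁ hv₂ (hM.mulVec_eq_smul_of_isMaxOn hv₁ hmax₁)
    ((hM.mulVec_eq_smul_of_isMaxOn hv₂ hmax₂).trans (by rw [hμ]))
    (G := p • A - r • B) (by rw [hG]; linarith) (by rw [hG]; linarith)
  have hμw : w ⬝ᵥ M *ᵥ w = μ := by
    rw [hMw, dotProduct_smul, mem_unitSphere.1 hw, smul_eq_mul, mul_one]
  have hμneg : μ < 0 := by
    rw [← hμw, dotProduct_mulVec_add_smul_add_smul]
    exact add_mul_add_mul_neg (h w hw).1 (h w hw).2 hpr (by rw [hG] at hGw; linarith)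
  exact fun v hv => (hmax₁ hv).trans_lt hμneg

end UnitSphere

section Main

variable {ι : Type*} [Fintype ι]

theorem exists_pos_forall_unitSphere_neg_of_le_dotProduct_mulVec {Z A B : Matrix ι ι ℝ}
    (hZ : Z.IsHermitian) (hA : A.IsHermitian) (hB : B.IsHermitian) {δ : ℝ} (hδ : 0 < δ)
    (hAδ : ∀ v ∈ unitSphere ι, δ ≤ v ⬝ᵥ A *ᵥ v) (hBδ : ∀ v ∈ unitSphere ι, δ ≤ v ⬝ᵥ B *ᵥ v)
    (h : ∀ v ∈ unitSphere ι,
      v ⬝ᵥ Z *ᵥ v < 0 ∧ 4 * (v ⬝ᵥ A *ᵥ v) * (v ⬝ᵥ B *ᵥ v) < (v ⬝ᵥ Z *ᵥ v) ^ 2) :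
    ∃ ε : ℝ, 0 < ε ∧ ∀ v ∈ unitSphere ι, v ⬝ᵥ (Z + ε • A + ε⁻¹ • B) *ᵥ v < 0 := by
  rcases (unitSphere ι).eq_empty_or_nonempty with hS | hne
  · exact ⟨1, one_pos, by simp [hS]⟩
  obtain ⟨CA, hCA⟩ :=
    isCompact_unitSphere.bddAbove_image (continuous_dotProduct_mulVec A).continuousOn
  obtain ⟨CB, hCB⟩ :=
    isCompact_unitSphere.bddAbove_image (continuous_dotProduct_mulVec B).continuousOn
  obtain ⟨s₁, hs₁⟩ := exists_exp_neg_mul_le_exp_mul hδ hAδ fun v hv =>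
    ⟨hδ.le.trans (hBδ v hv), hCB ⟨v, hv, rfl⟩⟩
  obtain ⟨s₂, hs₂⟩ := exists_exp_neg_mul_le_exp_mul hδ hBδ fun v hv =>
    ⟨hδ.le.trans (hAδ v hv), hCA ⟨v, hv, rfl⟩⟩
  obtain ⟨s, ⟨v₁, hv₁, hmax₁, hg₁⟩, v₂, hv₂, hmax₂, hg₂⟩ :=
    exists_isMaxOn_nonneg_and_isMaxOn_nonpos isCompact_unitSphere hne
      (f := fun s v => v ⬝ᵥ (Z + exp s • A + exp (-s) • B) *ᵥ v)
      (g := fun s v => exp s * (v ⬝ᵥ A *ᵥ v) - exp (-s) * (v ⬝ᵥ B *ᵥ v))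
      (by simp only [dotProduct_mulVec_add_smul_add_smul]; fun_prop) (by fun_prop)
      ⟨s₁, fun v hv => sub_nonneg.2 (hs₁ v hv)⟩
      ⟨-s₂, fun v hv => by simpa only [neg_neg, sub_nonpos] using hs₂ v hv⟩
  refine ⟨exp s, exp_pos s, ?_⟩
  rw [← Real.exp_neg]
  exact forall_unitSphere_dotProduct_mulVec_neg_of_isMaxOn hZ hA hB
    (by rw [← exp_add, add_neg_cancel, exp_zero]) h hv₁ hv₂ hmax₁ hmax₂ (sub_nonneg.1 hg₁)
    (sub_nonpos.1 hg₂)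

theorem exists_pos_forall_unitSphere_neg_of_posSemidef [DecidableEq ι] {Z A B : Matrix ι ι ℝ}
    (hZ : Z.IsHermitian) (hA : A.PosSemidef) (hB : B.PosSemidef)
    (h : ∀ v ∈ unitSphere ι,
      v ⬝ᵥ Z *ᵥ v < 0 ∧ 4 * (v ⬝ᵥ A *ᵥ v) * (v ⬝ᵥ B *ᵥ v) < (v ⬝ᵥ Z *ᵥ v) ^ 2) :
    ∃ ε : ℝ, 0 < ε ∧ ∀ v ∈ unitSphere ι, v ⬝ᵥ (Z + ε • A + ε⁻¹ • B) *ᵥ v < 0 := by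
  have hq (M : Matrix ι ι ℝ) (c : ℝ) {v : ι → ℝ} (hv : v ∈ unitSphere ι) :
      v ⬝ᵥ (M + c • 1) *ᵥ v = v ⬝ᵥ M *ᵥ v + c := by
    rw [add_mulVec, smul_mulVec, one_mulVec, dotProduct_add, dotProduct_smul,
      mem_unitSphere.1 hv, smul_eq_mul, mul_one]
  have hA0 (v : ι → ℝ) : 0 ≤ v ⬝ᵥ A *ᵥ v := by simpa using hA.dotProduct_mulVec_nonneg v
  have hB0 (v : ι → ℝ) : 0 ≤ v ⬝ᵥ B *ᵥ v := by simpa using hB.dotProduct_mulVec_nonneg v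
  -- the strict inequality survives replacing `A`, `B` by `A + δ • 1`, `B + δ • 1`
  obtain ⟨δ, hδ, hδS⟩ := isCompact_unitSphere.exists_pos_forall_pos
    (F := fun δ v => (v ⬝ᵥ Z *ᵥ v) ^ 2 - 4 * (v ⬝ᵥ A *ᵥ v + δ) * (v ⬝ᵥ B *ᵥ v + δ))
    (by fun_prop) fun v hv => by simpa using (h v hv).2
  obtain ⟨ε, hε, hneg⟩ := exists_pos_forall_unitSphere_neg_of_le_dotProduct_mulVec hZ
    (hA.isHermitian.add (isHermitian_one.smul (.all δ)))
    (hB.isHermitian.add (isHermitian_one.smul (.all δ))) hδ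
    (fun v hv => by rw [hq A δ hv]; linarith [hA0 v])
    (fun v hv => by rw [hq B δ hv]; linarith [hB0 v])
    fun v hv => ⟨(h v hv).1, by rw [hq A δ hv, hq B δ hv]; linarith [hδS v hv]⟩
  refine ⟨ε, hε, fun v hv => ?_⟩
  have := hneg v hv
  rw [dotProduct_mulVec_add_smul_add_smul, hq A δ hv, hq B δ hv] at this
  rw [dotProduct_mulVec_add_smul_add_smul]
  have : 0 ≤ ε * δ + ε⁻¹ * δ := by positivity
  linarith

end Main

/-- Petersen's Lemma: For a symmetric `Z ∈ ℝ^{n×n}` and matrices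
`X ∈ ℝ^{n×p}`, `Y ∈ ℝ^{q×n}`, the matrix `Z + X Δ Y + Yᵀ Δᵀ Xᵀ` is negative definite for
every `Δ` with `Δᵀ Δ ⪯ I_q` if and only if there exists `ε > 0` such that
`Z + ε X Xᵀ + (1/ε) Yᵀ Y` is negative definite. -/
theorem petersen_lemma
    {n p q : ℕ} (Z : Matrix (Fin n) (Fin n) ℝ) (hZ : Z.IsSymm)
    (X : Matrix (Fin n) (Fin p) ℝ) (Y : Matrix (Fin q) (Fin n) ℝ) :
    (∀ Δ : Matrix (Fin p) (Fin q) ℝ,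
        ((1 : Matrix (Fin q) (Fin q) ℝ) - Δᵀ * Δ).PosSemidef →
          (-(Z + X * Δ * Y + Yᵀ * Δᵀ * Xᵀ)).PosDef) ↔
      ∃ ε : ℝ, 0 < ε ∧ (-(Z + ε • (X * Xᵀ) + (1 / ε) • (Yᵀ * Y))).PosDef := by
  have hZ' : Z.IsHermitian := isHermitian_iff_isSymm.2 hZ
  have hA : (X * Xᵀ).PosSemidef := by simpa using posSemidef_self_mul_conjTranspose X
  have hB : (Yᵀ * Y).PosSemidef := by simpa using posSemidef_conjTranspose_mul_self Y
  have hΔ (Δ : Matrix (Fin p) (Fin q) ℝ) : (Z + X * Δ * Y + Yᵀ * Δᵀ * Xᵀ).IsHermitian := by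
    rw [add_assoc, ← transpose_mul, ← transpose_mul, ← Matrix.mul_assoc]
    exact hZ'.add (by simpa using isHermitian_add_transpose_self (X * Δ * Y))
  have hε (ε : ℝ) : (Z + ε • (X * Xᵀ) + ε⁻¹ • (Yᵀ * Y)).IsHermitian :=
    (hZ'.add (hA.isHermitian.smul (.all ε))).add (hB.isHermitian.smul (.all _))
  simp only [one_div]
  constructor
  · intro hrobust
    obtain ⟨ε, hε₀, hneg⟩ := exists_pos_forall_unitSphere_neg_of_posSemidef hZ' hA hB
      fun v hv => by
        rw [dotProduct_mulVec_mul_transpose, dotProduct_mulVec_transpose_mul]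
        refine neg_and_four_mul_lt_sq_of_forall_contraction fun Δ hΔ₁ => ?_
        rw [← dotProduct_mulVec_add_mul_mul_add_transpose]
        exact (hΔ Δ).posDef_neg_iff.1 (hrobust Δ hΔ₁) v (ne_zero_of_mem_unitSphere hv)
    exact ⟨ε, hε₀, (hε ε).posDef_neg_iff.2 fun v hv =>
      dotProduct_mulVec_neg_of_forall_unitSphere hneg hv⟩
  · rintro ⟨ε, hε₀, hneg⟩ Δ hΔ₁
    exact (hΔ Δ).posDef_neg_iff.2 fun v hv =>
      (dotProduct_mulVec_add_mul_mul_add_transpose_le Z X Y hΔ₁ hε₀ v).trans_lt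
        ((hε ε).posDef_neg_iff.1 hneg v hv)
end
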